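/- arXiv:2306.10915 — 4 statements merged into one kernel-verified Lean document; each statement's English description precedes it below -/
import Mathlib

section
/- Let 𝒳, 𝒴, C be types, g : 𝒳 → 𝒳 → C a comparison function, f_r : C × C × 𝒴 × 𝒴 → ℝ^{d_rel} a relational encoder, and define the full relational encoding ρ_full(x★; x, y) = Σ_{n=1}^{N} Σ_{n'=1}^{N} f_r(g(x_n, x★), g(x_n, x_{n'}), y_n, y_{n'}). If τ : 𝒳 → 𝒳 satisfies g(τ a, τ b) = g(a, b) for all a, b : 𝒳, then for all x : Fin N → 𝒳, y : Fin N → 𝒴, and x★ : 𝒳, ρ_full(τ x★; τ ∘ x, y) = ρ_full(x★; x, y). -/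
open scoped BigOperators

noncomputable def rhoFull {𝒳 𝒴 C : Type*} {N dRel : ℕ}
    (g : 𝒳 → 𝒳 → C) (fr : C × C × 𝒴 × 𝒴 → EuclideanSpace ℝ (Fin dRel))
    (xstar : 𝒳) (x : Fin N → 𝒳) (y : Fin N → 𝒴) : EuclideanSpace ℝ (Fin dRel) :=
  ∑ n : Fin N, ∑ n' : Fin N, fr (g (x n) xstar, g (x n) (x n'), y n, y n')

/-- the full relational encoding is invariant under any map `τ`
that leaves the comparison function invariant. -/
theorem rhoFull_invariant {𝒳 𝒴 C : Type*} {N dRel : ℕ}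
    (g : 𝒳 → 𝒳 → C) (fr : C × C × 𝒴 × 𝒴 → EuclideanSpace ℝ (Fin dRel))
    (τ : 𝒳 → 𝒳) (hτ : ∀ a b : 𝒳, g (τ a) (τ b) = g a b) :
    ∀ (x : Fin N → 𝒳) (y : Fin N → 𝒴) (xstar : 𝒳),
      rhoFull g fr (τ xstar) (τ ∘ x) y = rhoFull g fr xstar x y := by
  intro x y xstar
  simp only [rhoFull, Function.comp_apply, hτ]
end

section
/- Let 𝒳, 𝒴, C be types, g : 𝒳 → 𝒳 → C a comparison function, f_r : C × C × 𝒴 → ℝ^{d_rel} a relational encoder, and define the diagonal relational encoding ρ_diag(x★; x, y) = Σ_{n=1}^{N} f_r(g(x_n, x★), g(x_n, x_n), y_n). If τ : 𝒳 → 𝒳 satisfies g(τ a, τ b) = g(a, b) for all a, b : 𝒳, then for all x : Fin N → 𝒳, y : Fin N → 𝒴, and x★ : 𝒳, ρ_diag(τ x★; τ ∘ x, y) = ρ_diag(x★; x, y). -/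
open scoped BigOperators

/-- The diagonal (simple) relational encoding. -/
noncomputable def rhoDiag {𝒳 𝒴 C : Type*} {N dRel : ℕ}
    (g : 𝒳 → 𝒳 → C) (fr : C × C × 𝒴 → EuclideanSpace ℝ (Fin dRel))
    (xstar : 𝒳) (x : Fin N → 𝒳) (y : Fin N → 𝒴) : EuclideanSpace ℝ (Fin dRel) :=
  ∑ n : Fin N, fr (g (x n) xstar, g (x n) (x n), y n)

/-- the diagonal relational encoding is invariant under any map `τ`
that leaves the comparison function invariant. -/
theorem rhoDiag_invariant {𝒳 𝒴 C : Type*} {N dRel : ℕ}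
    (g : 𝒳 → 𝒳 → C) (fr : C × C × 𝒴 → EuclideanSpace ℝ (Fin dRel))
    (τ : 𝒳 → 𝒳) (hτ : ∀ a b : 𝒳, g (τ a) (τ b) = g a b) :
    ∀ (x : Fin N → 𝒳) (y : Fin N → 𝒴) (xstar : 𝒳),
      rhoDiag g fr (τ xstar) (τ ∘ x) y = rhoDiag g fr xstar x y := by
  intro x y xstar
  simp only [rhoDiag, Function.comp_apply, hτ]
end

section
/- The distance comparison function is context-preserving with respect to rigid transformations: if x, x' : Fin N → EuclideanSpace ℝ d are two indexed families of points whose pairwise Euclidean distances agree, i.e., ‖x'_n − x'_{n'}‖ = ‖x_n − x_{n'}‖ for all n, n' : Fin N, then there exists an affine isometry equivalence τ of EuclideanSpace ℝ d such that x'_n = τ(x_n) for all n : Fin N. -/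
open Module Finset

/-- Key lemma: if two families of vectors in a finite-dimensional real inner product
space have the same Gram matrix, there is a linear isometry equivalence mapping one
to the other. -/
theorem exists_linearIsometryEquiv_of_inner_eq {N : ℕ}
    {V : Type*} [NormedAddCommGroup V] [InnerProductSpace ℝ V] [FiniteDimensional ℝ V]
    (y y' : Fin N → V)
    (hg : ∀ n m : Fin N, (inner ℝ (y' n) (y' m) : ℝ) = inner ℝ (y n) (y m)) :
    ∃ L : V ≃ₗᵢ[ℝ] V, ∀ n, L (y n) = y' n := by
  classical
  -- the "linear combination" maps
  let T : (Fin N → ℝ) →ₗ[ℝ] V :=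
    { toFun := fun c => ∑ n, c n • y n
      map_add' := by
        intro a b; simp [add_smul, Finset.sum_add_distrib]
      map_smul' := by
        intro r a; simp [smul_smul, Finset.smul_sum] }
  let T' : (Fin N → ℝ) →ₗ[ℝ] V :=
    { toFun := fun c => ∑ n, c n • y' n
      map_add' := by
        intro a b; simp [add_smul, Finset.sum_add_distrib]
      map_smul' := by
        intro r a; simp [smul_smul, Finset.smul_sum] }
  have key : ∀ c : Fin N → ℝ, (inner ℝ (T' c) (T' c) : ℝ) = inner ℝ (T c) (T c) := by
    intro c
    have e1 : (inner ℝ (T c) (T c) : ℝ) = ∑ n, ∑ m, c n * c m * inner ℝ (y n) (y m) := by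
      simp only [T, LinearMap.coe_mk, AddHom.coe_mk, sum_inner, inner_sum,
        real_inner_smul_left, real_inner_smul_right]
      exact Finset.sum_congr rfl fun n _ => Finset.sum_congr rfl fun m _ =>
        by rw [← mul_assoc, real_inner_comm]
    have e2 : (inner ℝ (T' c) (T' c) : ℝ) = ∑ n, ∑ m, c n * c m * inner ℝ (y' n) (y' m) := by
      simp only [T', LinearMap.coe_mk, AddHom.coe_mk, sum_inner, inner_sum,
        real_inner_smul_left, real_inner_smul_right]
      exact Finset.sum_congr rfl fun n _ => Finset.sum_congr rfl fun m _ =>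
        by rw [← mul_assoc, real_inner_comm]
    rw [e1, e2]
    exact Finset.sum_congr rfl fun n _ => Finset.sum_congr rfl fun m _ => by rw [hg]
  have hker : LinearMap.ker T ≤ LinearMap.ker T' := by
    intro c hc
    have hc0 : T c = 0 := hc
    have : (inner ℝ (T' c) (T' c) : ℝ) = 0 := by rw [key, hc0, inner_zero_right]
    exact inner_self_eq_zero.mp this
  -- factor T' through the range of T
  let S : Submodule ℝ V := LinearMap.range T
  let q := T.quotKerEquivRange
  let f₀ : S →ₗ[ℝ] V := ((LinearMap.ker T).liftQ T' hker).comp (q.symm : S →ₗ[ℝ] _)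
  have hf₀ : ∀ c : Fin N → ℝ, f₀ ⟨T c, LinearMap.mem_range_self T c⟩ = T' c := by
    intro c
    have hq : q ((LinearMap.ker T).mkQ c) = ⟨T c, LinearMap.mem_range_self T c⟩ := by
      rfl
    simp only [f₀, LinearMap.coe_comp, Function.comp_apply, LinearEquiv.coe_coe, ← hq,
      LinearEquiv.symm_apply_apply]
    simp [Submodule.liftQ_apply]
  have hnorm : ∀ s : S, ‖f₀ s‖ = ‖s‖ := by
    rintro ⟨s, hs⟩
    obtain ⟨c, rfl⟩ := hs
    rw [hf₀ c]
    have h2 : ‖T' c‖ ^ 2 = ‖T c‖ ^ 2 := by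
      rw [← real_inner_self_eq_norm_sq, ← real_inner_self_eq_norm_sq, key]
    exact (sq_eq_sq₀ (norm_nonneg _) (norm_nonneg _)).mp h2
  let f : S →ₗᵢ[ℝ] V := ⟨f₀, hnorm⟩
  let L₀ : V →ₗᵢ[ℝ] V := f.extend
  let L : V ≃ₗᵢ[ℝ] V := L₀.toLinearIsometryEquiv rfl
  refine ⟨L, fun n => ?_⟩
  have hmem : y n ∈ S := by
    refine ⟨Pi.single n 1, ?_⟩
    simp [T, Pi.single_apply]
  have hTy : T (Pi.single n 1) = y n := by simp [T, Pi.single_apply]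
  have hT'y : T' (Pi.single n 1) = y' n := by simp [T', Pi.single_apply]
  have : L (y n) = L₀ (y n) := LinearIsometry.toLinearIsometryEquiv_apply L₀ rfl (y n)
  rw [this]
  have : L₀ (y n) = f ⟨y n, hmem⟩ := f.extend_apply ⟨y n, hmem⟩
  rw [this]
  have hsub : (⟨y n, hmem⟩ : S) = ⟨T (Pi.single n 1), LinearMap.mem_range_self T _⟩ := by
    simp [hTy]
  show f₀ _ = y' n
  rw [hsub, hf₀, hT'y]

/-- the distance comparison function is context-preserving with
respect to rigid transformations: two point configurations with the same pairwise
Euclidean distances are related by an affine isometry equivalence. -/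
theorem dist_context_preserving {d N : ℕ}
    (x x' : Fin N → EuclideanSpace ℝ (Fin d))
    (h : ∀ n n' : Fin N, ‖x' n - x' n'‖ = ‖x n - x n'‖) :
    ∃ τ : EuclideanSpace ℝ (Fin d) ≃ᵃⁱ[ℝ] EuclideanSpace ℝ (Fin d),
      ∀ n : Fin N, x' n = τ (x n) := by
  classical
  rcases Nat.eq_zero_or_pos N with rfl | hN
  · exact ⟨AffineIsometryEquiv.refl ℝ _, fun n => n.elim0⟩
  · let V := EuclideanSpace ℝ (Fin d)
    set n₀ : Fin N := ⟨0, hN⟩ with hn₀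
    let y : Fin N → V := fun n => x n - x n₀
    let y' : Fin N → V := fun n => x' n - x' n₀
    have hg : ∀ n m, (inner ℝ (y' n) (y' m) : ℝ) = inner ℝ (y n) (y m) := by
      intro n m
      have hn : ‖y' n‖ = ‖y n‖ := h n n₀
      have hm : ‖y' m‖ = ‖y m‖ := h m n₀
      have hnm : ‖y' n - y' m‖ = ‖y n - y m‖ := by
        have e : ∀ (z : Fin N → V), z n - z n₀ - (z m - z n₀) = z n - z m := by
          intro z; abel
        show ‖x' n - x' n₀ - (x' m - x' n₀)‖ = ‖x n - x n₀ - (x m - x n₀)‖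
        rw [e x, e x']
        exact h n m
      have p1 := norm_sub_sq_real (y n) (y m)
      have p2 := norm_sub_sq_real (y' n) (y' m)
      rw [hn, hm, hnm] at p2
      nlinarith [p1, p2]
    obtain ⟨L, hL⟩ := exists_linearIsometryEquiv_of_inner_eq y y' hg
    refine ⟨((AffineIsometryEquiv.constVAdd ℝ V (-(x n₀))).trans
        L.toAffineIsometryEquiv).trans (AffineIsometryEquiv.constVAdd ℝ V (x' n₀)),
        fun n => ?_⟩
    have hLn := hL n
    simp only [AffineIsometryEquiv.coe_trans, Function.comp_apply,
      AffineIsometryEquiv.coe_constVAdd, LinearIsometryEquiv.coe_toAffineIsometryEquiv,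
      vadd_eq_add, neg_add_eq_sub]
    rw [show (AffineIsometryEquiv.constVAdd ℝ V (-x n₀)) (x n) = y n from by
      change -x n₀ + x n = x n - x n₀; abel, hLn]
    show x' n = x' n₀ + (x' n - x' n₀)
    abel
end

section
/- The Gaussian process posterior with an isotropic kernel is an equivariant prediction map with respect to rigid transformations: let k : ℝ → ℝ, let s ≥ 0, let x : Fin N → EuclideanSpace ℝ d be context inputs and y : Fin N → ℝ context outputs, and let K be the N×N matrix with entries K_{n n'} = k(‖x_n − x_{n'}‖) + s·(if n = n' then 1 else 0), assumed invertible. Define the posterior mean m(x★; x, y) = Σ_{n,n'} k(‖x★ − x_n‖) · (K⁻¹)_{n n'} · y_{n'} and the posterior covariance k_post(x★, x★'; x) = k(‖x★ − x★'‖) − Σ_{n,n'} k(‖x★ − x_n‖) · (K⁻¹)_{n n'} · k(‖x_{n'} − x★'‖). Then for every affine isometry equivalence τ of EuclideanSpace ℝ d and all targets x★, x★', m(τ x★; τ ∘ x, y) = m(x★; x, y) and k_post(τ x★, τ x★'; τ ∘ x) = k_post(x★, x★'; x). -/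
open scoped BigOperators

/-- The Gram matrix of an isotropic kernel `K(a, b) = k ‖a - b‖` with noise
variance `s` on context inputs `x`. -/
noncomputable def gramIso {d N : ℕ} (k : ℝ → ℝ) (s : ℝ)
    (x : Fin N → EuclideanSpace ℝ (Fin d)) : Matrix (Fin N) (Fin N) ℝ :=
  fun n n' => k ‖x n - x n'‖ + s * (if n = n' then 1 else 0)

/-- The GP posterior mean with an isotropic kernel. -/
noncomputable def postMeanIso {d N : ℕ} (k : ℝ → ℝ) (s : ℝ)
    (x : Fin N → EuclideanSpace ℝ (Fin d)) (y : Fin N → ℝ)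
    (xstar : EuclideanSpace ℝ (Fin d)) : ℝ :=
  ∑ n : Fin N, ∑ n' : Fin N, k ‖xstar - x n‖ * (gramIso k s x)⁻¹ n n' * y n'

/-- The GP posterior covariance with an isotropic kernel. -/
noncomputable def postCovIso {d N : ℕ} (k : ℝ → ℝ) (s : ℝ)
    (x : Fin N → EuclideanSpace ℝ (Fin d))
    (xstar xstar' : EuclideanSpace ℝ (Fin d)) : ℝ :=
  k ‖xstar - xstar'‖ -
    ∑ n : Fin N, ∑ n' : Fin N,
      k ‖xstar - x n‖ * (gramIso k s x)⁻¹ n n' * k ‖x n' - xstar'‖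

/-! A rigid motion preserves all pairwise distances, hence the Gram matrix (so also its inverse) and
every kernel evaluation entering the posterior mean and covariance. -/

theorem Isometry.norm_map_sub_map {E F : Type*} [SeminormedAddCommGroup E]
    [SeminormedAddCommGroup F] {f : E → F} (hf : Isometry f) (a b : E) :
    ‖f a - f b‖ = ‖a - b‖ := by
  simpa only [dist_eq_norm] using hf.dist_eq a b

section Isometry

variable {d N : ℕ} {f : EuclideanSpace ℝ (Fin d) → EuclideanSpace ℝ (Fin d)}

theorem gramIso_comp_isometry (hf : Isometry f) (k : ℝ → ℝ) (s : ℝ)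
    (x : Fin N → EuclideanSpace ℝ (Fin d)) : gramIso k s (f ∘ x) = gramIso k s x := by
  ext n n'
  simp only [gramIso, Function.comp_apply, hf.norm_map_sub_map]

theorem postMeanIso_comp_isometry (hf : Isometry f) (k : ℝ → ℝ) (s : ℝ)
    (x : Fin N → EuclideanSpace ℝ (Fin d)) (y : Fin N → ℝ) (xstar : EuclideanSpace ℝ (Fin d)) :
    postMeanIso k s (f ∘ x) y (f xstar) = postMeanIso k s x y xstar := by
  simp only [postMeanIso, gramIso_comp_isometry hf, Function.comp_apply, hf.norm_map_sub_map]

theorem postCovIso_comp_isometry (hf : Isometry f) (k : ℝ → ℝ) (s : ℝ)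
    (x : Fin N → EuclideanSpace ℝ (Fin d)) (xstar xstar' : EuclideanSpace ℝ (Fin d)) :
    postCovIso k s (f ∘ x) (f xstar) (f xstar') = postCovIso k s x xstar xstar' := by
  simp only [postCovIso, gramIso_comp_isometry hf, Function.comp_apply, hf.norm_map_sub_map]

end Isometry

theorem gp_isotropic_rigid_equivariant_general {d N : ℕ}
    (k : ℝ → ℝ) (s : ℝ)
    (x : Fin N → EuclideanSpace ℝ (Fin d)) (y : Fin N → ℝ) :
    ∀ (τ : EuclideanSpace ℝ (Fin d) ≃ᵃⁱ[ℝ] EuclideanSpace ℝ (Fin d))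
      (xstar xstar' : EuclideanSpace ℝ (Fin d)),
      postMeanIso k s (⇑τ ∘ x) y (τ xstar) = postMeanIso k s x y xstar ∧
      postCovIso k s (⇑τ ∘ x) (τ xstar) (τ xstar') =
        postCovIso k s x xstar xstar' :=
  fun τ xstar xstar' =>
    ⟨postMeanIso_comp_isometry τ.isometry k s x y xstar,
      postCovIso_comp_isometry τ.isometry k s x xstar xstar'⟩

/-- the GP posterior with an isotropic kernel is an equivariant
prediction map with respect to rigid transformations. -/
theorem gp_isotropic_rigid_equivariant {d N : ℕ}
    (k : ℝ → ℝ) (s : ℝ) (hs : 0 ≤ s)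
    (x : Fin N → EuclideanSpace ℝ (Fin d)) (y : Fin N → ℝ)
    (hK : IsUnit (gramIso k s x)) :
    ∀ (τ : EuclideanSpace ℝ (Fin d) ≃ᵃⁱ[ℝ] EuclideanSpace ℝ (Fin d))
      (xstar xstar' : EuclideanSpace ℝ (Fin d)),
      postMeanIso k s (⇑τ ∘ x) y (τ xstar) = postMeanIso k s x y xstar ∧
      postCovIso k s (⇑τ ∘ x) (τ xstar) (τ xstar') =
        postCovIso k s x xstar xstar' :=
  gp_isotropic_rigid_equivariant_general k s x y
end
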